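/- arXiv:2504.00553 — 3 statements merged into one kernel-verified Lean document; each statement's English description precedes it below -/
import Mathlib

section
/- For a finite simple graph G on n vertices, the star b-chromatic number satisfies S_b(G) = n if and only if G is isomorphic to the complete graph K_n. -/
/-!
Definitions for star colorings, star recoloring steps, the strict partial order `≺ₛ`,
star b-vertices, the star (b-)chromatic number, star degrees and related notions,
following Božović, Mesarič Štesl, Peterin,
"On star b-chromatic number of a graph".
-/

variable {V : Type*}

/-- A proper coloring which is a *star coloring*: no path on four vertices
(vertices `a-b-x-y` with the three edges `ab`, `bx`, `xy`) is bicolored,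
i.e. the union of any two color classes induces a star forest. -/
def IsStarColoring (G : SimpleGraph V) (c : V → ℕ) : Prop :=
  (∀ ⦃u w⦄, G.Adj u w → c u ≠ c w) ∧
  ∀ a b x y : V, G.Adj a b → G.Adj b x → G.Adj x y →
    a ≠ x → b ≠ y → a ≠ y → ¬(c a = c x ∧ c b = c y)

/-- The set of colors used by a coloring. -/
def colorsUsed [Fintype V] (c : V → ℕ) : Finset ℕ :=
  Finset.image c Finset.univ

/-- `c'` is obtained from `c` by a *star recoloring step*: some color class `Vᵢ`
of the star coloring `c` is completely recolored, each of its vertices receiving one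
of the remaining colors of `c`, so that the result `c'` is again a star coloring
(using the colors of `c` minus `i`). We write `c' ⊲ₛ c`. -/
def StarRecolorStep [Fintype V] (G : SimpleGraph V) (c' c : V → ℕ) : Prop :=
  IsStarColoring G c ∧ IsStarColoring G c' ∧
  ∃ i ∈ colorsUsed c,
    (∀ v, c v ≠ i → c' v = c v) ∧
    ∀ v, c v = i → c' v ≠ i ∧ c' v ∈ colorsUsed c

/-- A minimal element of the strict partial order `≺ₛ` (the transitive closure of
the star recoloring step relation `⊲ₛ`): a star coloring on which no star
recoloring step can be performed. -/
def IsStarBColoring [Fintype V] (G : SimpleGraph V) (c : V → ℕ) : Prop :=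
  IsStarColoring G c ∧ ∀ c', ¬ StarRecolorStep G c' c

/-- The *star b-chromatic number* `Sᵦ(G)`: the maximum number of colors used by a
minimal element of `≺ₛ`. -/
noncomputable def starBChromaticNumber [Fintype V] (G : SimpleGraph V) : ℕ :=
  sSup {n | ∃ c : V → ℕ, IsStarBColoring G c ∧ (colorsUsed c).card = n}

/-- The *star chromatic number* `S(G)`: the minimum number of colors in a star coloring. -/
noncomputable def starChromaticNumber [Fintype V] (G : SimpleGraph V) : ℕ :=
  sInf {n | ∃ c : V → ℕ, IsStarColoring G c ∧ (colorsUsed c).card = n}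

/-- A color `j` is *blocked* for the vertex `v` under the star coloring `c`
if `j` is the color of `v` itself, or recoloring `v` alone with `j` destroys
the star coloring property. -/
def ColorBlockedFor [DecidableEq V] (G : SimpleGraph V) (c : V → ℕ) (v : V) (j : ℕ) : Prop :=
  j = c v ∨ ¬ IsStarColoring G (Function.update c v j)

/-- A color of `c` which is not blocked for `v` is *available* for `v`. -/
def ColorAvailableFor [Fintype V] [DecidableEq V] (G : SimpleGraph V) (c : V → ℕ)
    (v : V) (j : ℕ) : Prop :=
  j ∈ colorsUsed c ∧ ¬ ColorBlockedFor G c v j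

/-- `u-b-x-w` is an induced path on four vertices of `G`. -/
def IsInducedP4 (G : SimpleGraph V) (u b x w : V) : Prop :=
  G.Adj u b ∧ G.Adj b x ∧ G.Adj x w ∧
  ¬ G.Adj u x ∧ ¬ G.Adj b w ∧ ¬ G.Adj u w ∧
  u ≠ x ∧ b ≠ w ∧ u ≠ w

/-- The relation `~ᵢ` on a color class: two vertices of the same color joined
by an induced path on four vertices. -/
def P4Rel (G : SimpleGraph V) (c : V → ℕ) (u w : V) : Prop :=
  c u = c w ∧ ∃ b x, IsInducedP4 G u b x w

/-- The `P₄`-system of `v`: its equivalence class under the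
reflexive-transitive closure of `~ᵢ`. -/
def P4System (G : SimpleGraph V) (c : V → ℕ) (v : V) : Set V :=
  {u | Relation.ReflTransGen (P4Rel G c) v u}

/-- An available color `j` for `v` is *blocked for the `P₄`-system of `v`* if every
recoloring of the color class of `v` (each vertex receiving an available color)
in which `v` is recolored by `j` yields a bicolored path on four vertices between
two vertices of the `P₄`-system of `v`. -/
def BlockedForP4System [Fintype V] [DecidableEq V] (G : SimpleGraph V) (c : V → ℕ)
    (v : V) (j : ℕ) : Prop :=
  ∀ c' : V → ℕ,
    (∀ u, c u ≠ c v → c' u = c u) →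
    (∀ u, c u = c v → ColorAvailableFor G c u (c' u)) →
    c' v = j →
    ∃ u w b x, u ∈ P4System G c v ∧ w ∈ P4System G c v ∧
      G.Adj u b ∧ G.Adj b x ∧ G.Adj x w ∧ u ≠ x ∧ b ≠ w ∧ u ≠ w ∧
      c' u = c' x ∧ c' b = c' w

/-- A *star b-vertex*: every available color for `v` is blocked for its `P₄`-system. -/
def IsStarBVertex [Fintype V] [DecidableEq V] (G : SimpleGraph V) (c : V → ℕ) (v : V) : Prop :=
  ∀ j, ColorAvailableFor G c v j → BlockedForP4System G c v j

/-- The *star degree* `dˢ_G(v)` of a vertex: the maximum number of colors blocked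
for `v` over all star colorings of `G`. -/
noncomputable def starDegree [Fintype V] [DecidableEq V] (G : SimpleGraph V) (v : V) : ℕ :=
  sSup {n | ∃ c : V → ℕ, IsStarColoring G c ∧
    {j | j ∈ colorsUsed c ∧ ColorBlockedFor G c v j}.ncard = n}

/-- The `mₛ`-degree of a graph: the largest `k` such that `G` has `k` vertices
of star degree at least `k - 1` (equivalently, with the vertices ordered by
non-increasing star degree, `mₛ(G) = max {i : i - 1 ≤ dˢ_G(vᵢ)}`). -/
noncomputable def msDegree [Fintype V] [DecidableEq V] (G : SimpleGraph V) : ℕ :=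
  sSup {k | ∃ s : Finset V, s.card = k ∧ ∀ v ∈ s, k - 1 ≤ starDegree G v}

/-- The maximum degree `Δ(G)` of a graph. -/
noncomputable def maxDeg (G : SimpleGraph V) : ℕ :=
  sSup {d | ∃ v : V, (G.neighborSet v).ncard = d}

/-- The *b-chromatic number* `φ(G)`: the maximum number of colors of a proper coloring
in which every color class contains a vertex whose closed neighborhood contains
all the colors. -/
noncomputable def bChromaticNumber [Fintype V] (G : SimpleGraph V) : ℕ :=
  sSup {k | ∃ c : V → ℕ, (∀ ⦃u w⦄, G.Adj u w → c u ≠ c w) ∧ (colorsUsed c).card = k ∧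
    ∀ i ∈ colorsUsed c, ∃ v, c v = i ∧
      ∀ j ∈ colorsUsed c, ∃ u, (u = v ∨ G.Adj v u) ∧ c u = j}

/-- The join `G ∨ H` of two simple graphs: disjoint union of `G` and `H`
together with all edges between the two vertex sets. -/
def graphJoin {α β : Type*} (G : SimpleGraph α) (H : SimpleGraph β) :
    SimpleGraph (α ⊕ β) where
  Adj x y :=
    (∃ a b, x = Sum.inl a ∧ y = Sum.inl b ∧ G.Adj a b) ∨
    (∃ a b, x = Sum.inr a ∧ y = Sum.inr b ∧ H.Adj a b) ∨
    (∃ a b, x = Sum.inl a ∧ y = Sum.inr b) ∨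
    (∃ a b, x = Sum.inr a ∧ y = Sum.inl b)
  symm := by
    constructor
    rintro x y (⟨a,b,rfl,rfl,h⟩|⟨a,b,rfl,rfl,h⟩|⟨a,b,rfl,rfl⟩|⟨a,b,rfl,rfl⟩)
    · exact Or.inl ⟨b, a, rfl, rfl, h.symm⟩
    · exact Or.inr (Or.inl ⟨b, a, rfl, rfl, h.symm⟩)
    · exact Or.inr (Or.inr (Or.inr ⟨b, a, rfl, rfl⟩))
    · exact Or.inr (Or.inr (Or.inl ⟨b, a, rfl, rfl⟩))
  loopless := by
    constructor
    rintro x (⟨a,b,h1,h2,h⟩|⟨a,b,h1,h2,h⟩|⟨a,b,h1,h2⟩|⟨a,b,h1,h2⟩) <;> subst h1 <;>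
      simp_all [SimpleGraph.irrefl]

/-- `N₂(v)`: vertices at distance exactly two from `v`. -/
def distTwoSet (G : SimpleGraph V) (v : V) : Set V := {u | G.dist v u = 2}

/-- `N₃(v)`: vertices at distance exactly three from `v`. -/
def distThreeSet (G : SimpleGraph V) (v : V) : Set V := {u | G.dist v u = 3}

/-- `X(v)`: vertices at distance two from `v` with no neighbor at distance three from `v`. -/
def XSet (G : SimpleGraph V) (v : V) : Set V :=
  {u | u ∈ distTwoSet G v ∧ ∀ w ∈ distThreeSet G v, ¬ G.Adj u w}

/-- `Y(v)`: vertices at distance two from `v` having a neighbor at distance three from `v`. -/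
def YSet (G : SimpleGraph V) (v : V) : Set V := distTwoSet G v \ XSet G v

/-!
A star b-coloring with `n = |V|` colors is injective. If `G` has two distinct non-adjacent
vertices `u, v`, giving `u` the color of `v` leaves `{u, v}` as the only monochromatic pair; a
bicolored `P₄` would need two such pairs, making `u` and `v` adjacent. So this is a star
recoloring step and the coloring was not minimal. Conversely, in `Kₙ` every vertex of a recolored class would take the color of
one of its neighbours, so an injective coloring admits no step.
-/

lemma card_colorsUsed_le [Fintype V] (c : V → ℕ) :
    (colorsUsed c).card ≤ Fintype.card V :=
  Finset.card_image_le

lemma mem_colorsUsed [Fintype V] (c : V → ℕ) (v : V) : c v ∈ colorsUsed c :=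
  Finset.mem_image_of_mem c (Finset.mem_univ v)

lemma card_colorsUsed_eq_card_iff [Fintype V] {c : V → ℕ} :
    (colorsUsed c).card = Fintype.card V ↔ Function.Injective c := by
  rw [colorsUsed, ← Finset.card_univ, Finset.card_image_iff, Finset.coe_univ,
    Set.injOn_univ]

lemma isStarColoring_of_injective (G : SimpleGraph V) {c : V → ℕ}
    (hc : Function.Injective c) : IsStarColoring G c :=
  ⟨fun _ _ hadj he => hadj.ne (hc he), fun _ _ _ _ _ _ _ hax _ _ h => hax (hc h.1)⟩

lemma StarRecolorStep.card_colorsUsed_lt [Fintype V] {G : SimpleGraph V} {c' c : V → ℕ}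
    (h : StarRecolorStep G c' c) : (colorsUsed c').card < (colorsUsed c).card := by
  obtain ⟨-, -, i, hi, hkeep, hchange⟩ := h
  have hsub : colorsUsed c' ⊆ (colorsUsed c).erase i := by
    simp only [colorsUsed, Finset.image_subset_iff, Finset.mem_univ, forall_const]
    intro v
    by_cases hv : c v = i
    · exact Finset.mem_erase.2 (hchange v hv)
    · rw [hkeep v hv]
      exact Finset.mem_erase.2 ⟨hv, mem_colorsUsed c v⟩
  exact (Finset.card_le_card hsub).trans_lt (Finset.card_erase_lt_of_mem hi)

/-- A star coloring with the fewest colors admits no step. -/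
lemma exists_isStarBColoring [Fintype V] (G : SimpleGraph V) : ∃ c, IsStarBColoring G c := by
  obtain ⟨c, hc, hmin⟩ := (measure fun c : V → ℕ => (colorsUsed c).card).wf.has_min
    {c | IsStarColoring G c}
    ⟨_, isStarColoring_of_injective G (exists_injective_nat V).choose_spec⟩
  exact ⟨c, hc, fun c' hstep => hmin c' hstep.2.1 hstep.card_colorsUsed_lt⟩

lemma starBChromaticNumber_eq_card_iff_exists_injective [Fintype V] (G : SimpleGraph V) :
    starBChromaticNumber G = Fintype.card V ↔
      ∃ c, IsStarBColoring G c ∧ Function.Injective c := by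
  set S := {n | ∃ c : V → ℕ, IsStarBColoring G c ∧ (colorsUsed c).card = n}
  have hbdd : BddAbove S := ⟨Fintype.card V, by rintro _ ⟨c, -, rfl⟩; exact card_colorsUsed_le c⟩
  have hne : S.Nonempty :=
    let ⟨c, hc⟩ := exists_isStarBColoring G
    ⟨_, c, hc, rfl⟩
  simp only [← card_colorsUsed_eq_card_iff]
  constructor
  · intro h
    exact h ▸ Nat.sSup_mem hne hbdd
  · intro hmem
    exact le_antisymm (csSup_le hne fun _ ⟨c, _, hn⟩ => hn ▸ card_colorsUsed_le c)
      (le_csSup hbdd hmem)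

lemma Function.Injective.eq_and_eq_of_update_eq {α β : Type*} [DecidableEq α] {c : α → β}
    (hc : Function.Injective c) {u v a x : α} (hax : a ≠ x)
    (h : Function.update c u (c v) a = Function.update c u (c v) x) :
    (a = u ∧ x = v) ∨ (a = v ∧ x = u) := by
  simp only [Function.update_apply] at h
  split_ifs at h with ha hx hx
  · exact absurd (ha.trans hx.symm) hax
  · exact Or.inl ⟨ha, hc h.symm⟩
  · exact Or.inr ⟨hc h, hx⟩
  · exact absurd (hc h) hax

lemma isStarColoring_update_of_not_adj [DecidableEq V] {G : SimpleGraph V} {c : V → ℕ}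
    (hc : Function.Injective c) {u v : V} (huv : ¬ G.Adj u v) :
    IsStarColoring G (Function.update c u (c v)) := by
  constructor
  · intro p q hpq he
    rcases hc.eq_and_eq_of_update_eq hpq.ne he with ⟨rfl, rfl⟩ | ⟨rfl, rfl⟩
    · exact huv hpq
    · exact huv hpq.symm
  · rintro a b x y hab - - hax hby - ⟨hsame_ax, hsame_by⟩
    rcases hc.eq_and_eq_of_update_eq hax hsame_ax with ⟨rfl, rfl⟩ | ⟨rfl, rfl⟩ <;>
      rcases hc.eq_and_eq_of_update_eq hby hsame_by with ⟨rfl, rfl⟩ | ⟨rfl, rfl⟩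
    · exact hab.ne rfl
    · exact huv hab
    · exact huv hab.symm
    · exact hab.ne rfl

lemma IsStarBColoring.eq_top_of_injective [Fintype V] {G : SimpleGraph V} {c : V → ℕ}
    (hb : IsStarBColoring G c) (hc : Function.Injective c) : G = ⊤ := by
  classical
  by_contra hG
  obtain ⟨u, v, huv, hnadj⟩ := SimpleGraph.ne_top_iff_exists_not_adj.1 hG
  refine hb.2 _ ⟨hb.1, isStarColoring_update_of_not_adj hc hnadj, c u, mem_colorsUsed c u,
    fun w hw => Function.update_of_ne (fun h => hw (congrArg c h)) _ _, fun w hw => ?_⟩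
  obtain rfl := hc hw
  rw [Function.update_self]
  exact ⟨fun h => huv (hc h.symm), mem_colorsUsed c v⟩

lemma isStarBColoring_top_of_injective [Fintype V] {c : V → ℕ} (hc : Function.Injective c) :
    IsStarBColoring (⊤ : SimpleGraph V) c := by
  refine ⟨isStarColoring_of_injective _ hc, ?_⟩
  rintro c' ⟨-, hc'star, i, hi, hkeep, hchange⟩
  obtain ⟨w, -, rfl⟩ := Finset.mem_image.1 hi
  obtain ⟨hw_changed, hw_old⟩ := hchange w rfl
  obtain ⟨z, -, hz⟩ := Finset.mem_image.1 hw_old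
  have hz_kept : c' z = c z := hkeep z (hz ▸ hw_changed)
  have hwz : w ≠ z := by
    rintro rfl
    exact hw_changed hz.symm
  exact hc'star.1 ((SimpleGraph.top_adj w z).2 hwz) (hz.symm.trans hz_kept.symm)

/-- **Proposition.** For a finite simple graph `G` on `n` vertices, `Sᵦ(G) = n` if and
only if `G` is (isomorphic to) the complete graph `Kₙ`. -/
theorem starBChromaticNumber_eq_card_iff [Fintype V] (G : SimpleGraph V) :
    starBChromaticNumber G = Fintype.card V ↔ G = ⊤ := by
  rw [starBChromaticNumber_eq_card_iff_exists_injective]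
  constructor
  · rintro ⟨c, hb, hc⟩
    exact hb.eq_top_of_injective hc
  · rintro rfl
    obtain ⟨c, hc⟩ := exists_injective_nat V
    exact ⟨c, isStarBColoring_top_of_injective hc, hc⟩
end

section
/- Let G be a finite simple graph and c a star k-coloring of G. Then c is a minimal element of the strict partial order ≺_s (i.e., no star recoloring step can be performed on c) if and only if every color class V_i, i ∈ [k], contains a star b-vertex. -/
/-!
Definitions for star colorings, star recoloring steps, the strict partial order `≺ₛ`,
star b-vertices, the star (b-)chromatic number, star degrees and related notions,
following Božović, Mesarič Štesl, Peterin,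
"On star b-chromatic number of a graph".
-/

variable {V : Type*}

/-!
Recoloring the class `Vᵢ` in one star recoloring step amounts to giving every vertex of `Vᵢ` an
available color so that the result is again a star coloring. Any bicolored `P₄` created by such a
recoloring has both ends in `Vᵢ` and is induced in `G`, so it lies inside a single `P₄`-system.
Hence, if no vertex of `Vᵢ` is a star b-vertex, the recolorings witnessing this for the
individual `P₄`-systems glue to a star recoloring step.
-/

variable {G : SimpleGraph V} {c d : V → ℕ} {i : ℕ} {a b x y u v w : V}

def IsBicoloredP4 (G : SimpleGraph V) (c : V → ℕ) (a b x y : V) : Prop :=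
  G.Adj a b ∧ G.Adj b x ∧ G.Adj x y ∧ a ≠ x ∧ b ≠ y ∧ a ≠ y ∧ c a = c x ∧ c b = c y

theorem IsBicoloredP4.reverse (h : IsBicoloredP4 G c a b x y) : IsBicoloredP4 G c y x b a :=
  let ⟨hab, hbx, hxy, hax, hby, hay, e1, e2⟩ := h
  ⟨hxy.symm, hbx.symm, hab.symm, hby.symm, hax.symm, hay.symm, e2.symm, e1.symm⟩

theorem IsBicoloredP4.congr (h : IsBicoloredP4 G c a b x y)
    (ha : c a = d a) (hb : c b = d b) (hx : c x = d x) (hy : c y = d y) :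
    IsBicoloredP4 G d a b x y :=
  let ⟨hab, hbx, hxy, hax, hby, hay, e1, e2⟩ := h
  ⟨hab, hbx, hxy, hax, hby, hay, ha ▸ hx ▸ e1, hb ▸ hy ▸ e2⟩

theorem IsStarColoring.not_isBicoloredP4 (hc : IsStarColoring G c) :
    ¬ IsBicoloredP4 G c a b x y :=
  fun ⟨hab, hbx, hxy, hax, hby, hay, e⟩ => hc.2 a b x y hab hbx hxy hax hby hay e

theorem IsStarColoring.of_not_isBicoloredP4 (hproper : ∀ ⦃u w⦄, G.Adj u w → c u ≠ c w)
    (h : ∀ a b x y, ¬ IsBicoloredP4 G c a b x y) : IsStarColoring G c :=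
  ⟨hproper, fun a b x y hab hbx hxy hax hby hay e => h a b x y ⟨hab, hbx, hxy, hax, hby, hay, e⟩⟩

theorem P4Rel.symm (h : P4Rel G c u w) : P4Rel G c w u :=
  let ⟨hc, b, x, hub, hbx, hxw, hux, hbw, huw, hux', hbw', huw'⟩ := h
  ⟨hc.symm, x, b, hxw.symm, hbx.symm, hub.symm, fun h => hbw h.symm, fun h => hux h.symm,
    fun h => huw h.symm, hbw'.symm, hux'.symm, huw'.symm⟩

theorem P4Rel.p4System_eq (h : P4Rel G c u w) : P4System G c u = P4System G c w := by
  ext z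
  exact ⟨(Relation.ReflTransGen.single h.symm).trans, (Relation.ReflTransGen.single h).trans⟩

theorem mem_p4System_self : v ∈ P4System G c v := Relation.ReflTransGen.refl

theorem update_apply_of_recolor [DecidableEq V] (hout : ∀ u, c u ≠ i → d u = c u)
    {p : V} (hp : p = w ∨ c p ≠ i) : Function.update c w (d w) p = d p := by
  rcases eq_or_ne p w with rfl | hpw
  · exact Function.update_self ..
  · rw [Function.update_of_ne hpw, hout p (hp.resolve_left hpw)]

theorem IsStarColoring.update_of_recolor [DecidableEq V] (hc : IsStarColoring G c)
    (hd : IsStarColoring G d) (hout : ∀ v, c v ≠ i → d v = c v) (hu : c u = i) (hdu : d u ≠ i) :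
    IsStarColoring G (Function.update c u (d u)) := by
  have he_d {p : V} : p = u ∨ c p ≠ i → Function.update c u (d u) p = d p :=
    update_apply_of_recolor hout
  have hadj {p : V} (h : G.Adj u p) : c p ≠ i := hu ▸ (hc.1 h).symm
  -- Up to reversal, a bicolored path through `u` has `u` as its first or second vertex; all other
  -- vertices then lie outside `Vᵢ`, where the update agrees with `d`.
  have key {a b x y : V} (h : IsBicoloredP4 G (Function.update c u (d u)) a b x y)
      (hu : u = a ∨ u = b) : False := by
    obtain ⟨hab, hbx, -, hax, hby, hay, e1, e2⟩ := id h
    rcases hu with rfl | rfl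
    · have hb := hadj hab
      rw [Function.update_self, Function.update_of_ne hax.symm] at e1
      rw [Function.update_of_ne hab.ne', Function.update_of_ne hay.symm] at e2
      have hx : c x ≠ i := e1 ▸ hdu
      have hy : c y ≠ i := e2 ▸ hb
      exact hd.not_isBicoloredP4 <|
        h.congr (he_d (.inl rfl)) (he_d (.inr hb)) (he_d (.inr hx)) (he_d (.inr hy))
    · rw [Function.update_self, Function.update_of_ne hby.symm] at e2
      have hy : c y ≠ i := e2 ▸ hdu
      exact hd.not_isBicoloredP4 <| h.congr (he_d (.inr (hadj hab.symm))) (he_d (.inl rfl))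
        (he_d (.inr (hadj hbx))) (he_d (.inr hy))
  refine .of_not_isBicoloredP4 (fun p q hpq => ?_) fun a b x y h => ?_
  · by_cases hp : p = u
    · rw [he_d (.inl hp), he_d (.inr (hadj (hp ▸ hpq)))]
      exact hd.1 hpq
    by_cases hq : q = u
    · rw [he_d (.inl hq), he_d (.inr (hadj (hq ▸ hpq.symm)))]
      exact hd.1 hpq
    rw [Function.update_of_ne hp, Function.update_of_ne hq]
    exact hc.1 hpq
  · by_cases hab : u = a ∨ u = b
    · exact key h hab
    by_cases hyx : u = y ∨ u = x
    · exact key h.reverse hyx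
    simp only [not_or] at hab hyx
    exact hc.not_isBicoloredP4 <| h.congr (Function.update_of_ne (Ne.symm hab.1) ..)
      (Function.update_of_ne (Ne.symm hab.2) ..) (Function.update_of_ne (Ne.symm hyx.2) ..)
      (Function.update_of_ne (Ne.symm hyx.1) ..)

def recolorByP4System (G : SimpleGraph V) (c : V → ℕ) (i : ℕ) (D : Set V → V → ℕ) : V → ℕ :=
  fun u => if c u = i then D (P4System G c u) u else c u

theorem recolorByP4System_of_eq {D : Set V → V → ℕ} (hu : c u = i) :
    recolorByP4System G c i D u = D (P4System G c u) u :=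
  if_pos hu

theorem recolorByP4System_of_ne {D : Set V → V → ℕ} (hu : c u ≠ i) :
    recolorByP4System G c i D u = c u :=
  if_neg hu

section Recoloring

variable [Fintype V] [DecidableEq V] {j : ℕ}

theorem ColorAvailableFor.ne_color (h : ColorAvailableFor G c v j) : j ≠ c v :=
  (not_or.1 h.2).1

theorem ColorAvailableFor.isStarColoring_update (h : ColorAvailableFor G c v j) :
    IsStarColoring G (Function.update c v j) :=
  not_not.1 (not_or.1 h.2).2

theorem ColorAvailableFor.ne_of_adj (h : ColorAvailableFor G c v j) (hvw : G.Adj v w) :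
    j ≠ c w := by
  simpa [Function.update_of_ne hvw.ne'] using h.isStarColoring_update.1 hvw

def IsAvailableRecoloring (G : SimpleGraph V) (c : V → ℕ) (i : ℕ) (d : V → ℕ) : Prop :=
  (∀ u, c u ≠ i → d u = c u) ∧ ∀ u, c u = i → ColorAvailableFor G c u (d u)

def BicoloredP4FreeOn (G : SimpleGraph V) (d : V → ℕ) (S : Set V) : Prop :=
  ∀ u ∈ S, ∀ w ∈ S, ∀ b x, ¬ IsBicoloredP4 G d u b x w

theorem isStarBVertex_iff : IsStarBVertex G c v ↔
    ∀ d, IsAvailableRecoloring G c (c v) d → ¬ BicoloredP4FreeOn G d (P4System G c v) := by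
  constructor
  · rintro hv d ⟨hout, hin⟩ hfree
    obtain ⟨u, w, b, x, hu, hw, hP⟩ := hv (d v) (hin v rfl) d hout hin rfl
    exact hfree u hu w hw b x hP
  · rintro h j - d hout hin rfl
    by_contra hfree
    exact h d ⟨hout, hin⟩ fun u hu w hw b x hP => hfree ⟨u, w, b, x, hu, hw, hP⟩

theorem starRecolorStep_iff {c' : V → ℕ} : StarRecolorStep G c' c ↔
    IsStarColoring G c ∧ IsStarColoring G c' ∧
      ∃ i ∈ colorsUsed c, IsAvailableRecoloring G c i c' := by
  refine and_congr_right fun hc => and_congr_right fun hc' => exists_congr fun i =>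
    and_congr_right fun _ => ?_
  refine and_congr_right fun hout => forall_congr' fun u => forall_congr' fun hu => ?_
  refine ⟨fun ⟨hne, hused⟩ => ⟨hused, not_or.2 ⟨hu ▸ hne, ?_⟩⟩,
    fun hu' => ⟨hu ▸ hu'.ne_color, hu'.1⟩⟩
  exact not_not.2 (hc.update_of_recolor hc' hout hu hne)

namespace IsAvailableRecoloring

theorem adj_ne (hd : IsAvailableRecoloring G c i d) (hc : ∀ ⦃u w⦄, G.Adj u w → c u ≠ c w)
    {p q : V} (hpq : G.Adj p q) : d p ≠ d q := by
  by_cases hp : c p = i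
  · rw [hd.1 q (hp ▸ (hc hpq).symm)]
    exact (hd.2 p hp).ne_of_adj hpq
  by_cases hq : c q = i
  · rw [hd.1 p (hq ▸ hc hpq)]
    exact ((hd.2 q hq).ne_of_adj hpq.symm).symm
  rw [hd.1 p hp, hd.1 q hq]
  exact hc hpq

theorem not_isBicoloredP4_of_unique (hd : IsAvailableRecoloring G c i d) (hw : c w = i)
    (ha : a = w ∨ c a ≠ i) (hb : b = w ∨ c b ≠ i) (hx : x = w ∨ c x ≠ i) (hy : y = w ∨ c y ≠ i) :
    ¬ IsBicoloredP4 G d a b x y := fun h =>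
  (hd.2 w hw).isStarColoring_update.not_isBicoloredP4 <| h.congr
    (update_apply_of_recolor hd.1 ha).symm (update_apply_of_recolor hd.1 hb).symm
    (update_apply_of_recolor hd.1 hx).symm (update_apply_of_recolor hd.1 hy).symm

theorem color_left_eq (hd : IsAvailableRecoloring G c i d) (hc : IsStarColoring G c)
    (h : IsBicoloredP4 G d a b x y) : c a = i := by
  -- Otherwise either at most one vertex of the path lies in `Vᵢ`, which availability excludes,
  -- or exactly `b` and `y` do, and then the path is bicolored already under `c`.
  obtain ⟨hab, hbx, hxy, hax, hby, hay, e1, -⟩ := id h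
  by_contra ha
  by_cases hy : c y = i
  · have hx : c x ≠ i := hy ▸ hc.1 hxy
    by_cases hb : c b = i
    · refine hc.not_isBicoloredP4 ⟨hab, hbx, hxy, hax, hby, hay, ?_, hb.trans hy.symm⟩
      rw [← hd.1 a ha, ← hd.1 x hx, e1]
    exact hd.not_isBicoloredP4_of_unique hy (.inr ha) (.inr hb) (.inr hx) (.inl rfl) h
  by_cases hb : c b = i
  · have hx : c x ≠ i := hb ▸ (hc.1 hbx).symm
    exact hd.not_isBicoloredP4_of_unique hb (.inr ha) (.inl rfl) (.inr hx) (.inr hy) h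
  by_cases hx : c x = i
  · exact hd.not_isBicoloredP4_of_unique hx (.inr ha) (.inr hb) (.inl rfl) (.inr hy) h
  exact hc.not_isBicoloredP4 (h.congr (hd.1 a ha) (hd.1 b hb) (hd.1 x hx) (hd.1 y hy))

theorem p4Rel_of_isBicoloredP4 (hd : IsAvailableRecoloring G c i d) (hc : IsStarColoring G c)
    (h : IsBicoloredP4 G d a b x y) :
    c a = i ∧ c b ≠ i ∧ c x ≠ i ∧ P4Rel G c a y := by
  obtain ⟨hab, hbx, hxy, hax, hby, hay, e1, e2⟩ := id h
  have ha := hd.color_left_eq hc h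
  have hy := hd.color_left_eq hc h.reverse
  have hb : c b ≠ i := ha ▸ (hc.1 hab).symm
  have hx : c x ≠ i := hy ▸ hc.1 hxy
  refine ⟨ha, hb, hx, ha.trans hy.symm, b, x, hab, hbx, hxy, fun hax' => ?_, fun hby' => ?_,
    fun hay' => hc.1 hay' (ha.trans hy.symm), hax, hby, hay⟩
  · exact (hd.2 a ha).ne_of_adj hax' (e1.trans (hd.1 x hx))
  · exact (hd.2 y hy).ne_of_adj hby'.symm (e2.symm.trans (hd.1 b hb))

end IsAvailableRecoloring

variable {D : Set V → V → ℕ}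

theorem isAvailableRecoloring_recolorByP4System
    (hD : ∀ v, c v = i → IsAvailableRecoloring G c i (D (P4System G c v))) :
    IsAvailableRecoloring G c i (recolorByP4System G c i D) :=
  ⟨fun _ hu => recolorByP4System_of_ne hu,
    fun u hu => recolorByP4System_of_eq hu ▸ (hD u hu).2 u hu⟩

theorem isStarColoring_recolorByP4System (hc : IsStarColoring G c)
    (hD : ∀ v, c v = i → IsAvailableRecoloring G c i (D (P4System G c v)) ∧
      BicoloredP4FreeOn G (D (P4System G c v)) (P4System G c v)) :
    IsStarColoring G (recolorByP4System G c i D) := by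
  have hd := isAvailableRecoloring_recolorByP4System fun v hv => (hD v hv).1
  refine .of_not_isBicoloredP4 (fun _ _ => hd.adj_ne hc.1) fun a b x y h => ?_
  obtain ⟨ha, hb, hx, hay⟩ := hd.p4Rel_of_isBicoloredP4 hc h
  obtain ⟨hDa, hfree⟩ := hD a ha
  have hy : y ∈ P4System G c a := hay.p4System_eq ▸ mem_p4System_self
  refine hfree a mem_p4System_self y hy b x <| h.congr (recolorByP4System_of_eq ha)
    (recolorByP4System_of_ne hb ▸ (hDa.1 b hb).symm)
    (recolorByP4System_of_ne hx ▸ (hDa.1 x hx).symm) ?_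
  rw [recolorByP4System_of_eq (hay.1.symm.trans ha), hay.p4System_eq]

theorem exists_isStarColoring_isAvailableRecoloring (hc : IsStarColoring G c)
    (h : ∀ v, c v = i → ¬ IsStarBVertex G c v) :
    ∃ c', IsAvailableRecoloring G c i c' ∧ IsStarColoring G c' := by
  let D (S : Set V) : V → ℕ :=
    Classical.epsilon fun d => IsAvailableRecoloring G c i d ∧ BicoloredP4FreeOn G d S
  have hD (v : V) (hv : c v = i) : IsAvailableRecoloring G c i (D (P4System G c v)) ∧
      BicoloredP4FreeOn G (D (P4System G c v)) (P4System G c v) := by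
    refine Classical.epsilon_spec (p := fun d =>
      IsAvailableRecoloring G c i d ∧ BicoloredP4FreeOn G d (P4System G c v)) ?_
    simpa [isStarBVertex_iff, hv] using h v hv
  exact ⟨_, isAvailableRecoloring_recolorByP4System fun v hv => (hD v hv).1,
    isStarColoring_recolorByP4System hc hD⟩

end Recoloring

/-- **Theorem (characterization of minimal elements of `≺ₛ`).** A star coloring `c` of a
finite simple graph `G` is a minimal element of `≺ₛ` (i.e. no star recoloring step can be
performed on `c`) if and only if every color class of `c` contains a star b-vertex. -/
theorem minimal_iff_starBVertex [Fintype V] [DecidableEq V] (G : SimpleGraph V)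
    (c : V → ℕ) (hc : IsStarColoring G c) :
    (∀ c', ¬ StarRecolorStep G c' c) ↔
      ∀ i ∈ colorsUsed c, ∃ v, c v = i ∧ IsStarBVertex G c v := by
  constructor
  · intro hmin i hi
    by_contra! h
    obtain ⟨c', hd, hc'⟩ := exists_isStarColoring_isAvailableRecoloring hc h
    exact hmin c' (starRecolorStep_iff.2 ⟨hc, hc', i, hi, hd⟩)
  · intro hb c' hstep
    obtain ⟨-, hc', i, hi, hd⟩ := starRecolorStep_iff.1 hstep
    obtain ⟨v, rfl, hv⟩ := hb i hi
    exact isStarBVertex_iff.1 hv c' hd fun _ _ _ _ _ _ => hc'.not_isBicoloredP4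
end

section
/- For every positive integer n there exists a finite tree T with maximum degree Δ(T) = n whose star b-chromatic number attains the upper bound S_b(T) = Δ(T)² + 1 = n² + 1. -/
/-!
Definitions for star colorings, star recoloring steps, the strict partial order `≺ₛ`,
star b-vertices, the star (b-)chromatic number, star degrees and related notions,
following Božović, Mesarič Štesl, Peterin,
"On star b-chromatic number of a graph".
-/

variable {V : Type*}

/-!
If a star coloring uses at least `Δ² + 2` colors, any color class can be recolored greedily:
each of its vertices gets a color different from `i` and from the current colors of the at most
`Δ²` vertices within distance two. The new coloring separates every pair at distance at most two
that the old one separates, so it is again a star coloring, and the step shows `S_b ≤ Δ² + 1`.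

For `Δ = n ≥ 2` take `n² + 1` copies of a gadget: a root with `n` children, each child with
`n - 1` grandchildren, each grandchild with a pendant leaf. Vertex `v` of copy `i` gets the color
`i + offset v` modulo `n² + 1`, where root, children and grandchildren receive the offsets
`0, …, n²` and a leaf repeats the offset of its child. Equally colored vertices at distance two
are only a child and a leaf below it, whose common neighbor is a grandchild; as no two
grandchildren are adjacent, the coloring is a star coloring. The root of copy `i` cannot leave
color `i`: every other color sits on one of its children or on a grandchild `x` of a path
`root - child - x - leaf` whose child and leaf share a color, and none of these is recolored.
Consecutive copies are joined at leaves of alternating branches, which keeps a tree of maximum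
degree `n`. For `n = 1` the tree is `K₂`.
-/

open Finset

namespace SimpleGraph

variable {V : Type*} {G : SimpleGraph V}

theorem isTree_of_parent (r : V) (parent : V → V) (height : V → ℕ) (hr : parent r = r)
    (adj_parent : ∀ v, v ≠ r → G.Adj v (parent v))
    (height_parent_lt : ∀ v, v ≠ r → height (parent v) < height v)
    (eq_parent_of_adj : ∀ u v, G.Adj u v → parent u = v ∨ parent v = u) : G.IsTree := by
  have eq_parent_of_height_le : ∀ u w, G.Adj u w → height w ≤ height u → w = parent u := by
    intro u w huw hle
    refine (eq_parent_of_adj u w huw).elim Eq.symm fun hw => ?_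
    have hwr : w ≠ r := by
      rintro rfl
      exact G.irrefl (hw ▸ hr ▸ huw)
    exact absurd (hw ▸ height_parent_lt w hwr) hle.not_gt
  have reachable_root : ∀ v, G.Reachable v r := by
    intro v
    induction v using (measure height).wf.induction with
    | h v ih =>
      by_cases hv : v = r
      · exact hv ▸ Reachable.refl v
      · exact (adj_parent v hv).reachable.trans (ih _ (height_parent_lt v hv))
  have : Nonempty V := ⟨r⟩
  classical
  refine ⟨⟨fun u v => (reachable_root u).trans (reachable_root v).symm⟩, fun v c hc => ?_⟩
  -- the two cycle neighbors of a highest vertex of the cycle would both be its parent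
  obtain ⟨u, hu, hmax⟩ := c.support.toFinset.exists_max_image height
    ⟨v, List.mem_toFinset.2 c.start_mem_support⟩
  rw [List.mem_toFinset] at hu
  have hc' := hc.rotate hu
  have hnil : ¬ (c.rotate u hu).Nil := hc'.not_nil
  have height_le : ∀ k, height ((c.rotate u hu).getVert k) ≤ height u := fun k =>
    hmax _ (List.mem_toFinset.2 ((c.mem_support_rotate_iff u hu).1 (Walk.getVert_mem_support _ k)))
  apply hc'.snd_ne_penultimate
  rw [eq_parent_of_height_le u _ (Walk.adj_snd hnil) (height_le 1),
    eq_parent_of_height_le u _ (Walk.adj_penultimate hnil).symm (height_le _)]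

variable [Fintype V] [DecidableEq V] (G) [DecidableRel G.Adj]

def ballTwo (v : V) : Finset V :=
  (G.neighborFinset v).biUnion fun m => insert m ((G.neighborFinset m).erase v)

variable {G}

lemma mem_ballTwo {v w : V} :
    w ∈ G.ballTwo v ↔ w ≠ v ∧ (G.Adj v w ∨ ∃ m, G.Adj v m ∧ G.Adj m w) := by
  simp only [ballTwo, mem_biUnion, mem_insert, mem_erase, mem_neighborFinset]
  constructor
  · rintro ⟨m, hvm, rfl | ⟨hne, hmw⟩⟩
    exacts [⟨hvm.ne', Or.inl hvm⟩, ⟨hne, Or.inr ⟨m, hvm, hmw⟩⟩]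
  · rintro ⟨hne, hvw | ⟨m, hvm, hmw⟩⟩
    exacts [⟨w, hvw, Or.inl rfl⟩, ⟨m, hvm, Or.inr ⟨hne, hmw⟩⟩]

lemma mem_ballTwo_comm {v w : V} : w ∈ G.ballTwo v ↔ v ∈ G.ballTwo w := by
  suffices ∀ v w, w ∈ G.ballTwo v → v ∈ G.ballTwo w from ⟨this v w, this w v⟩
  simp only [mem_ballTwo]
  rintro v w ⟨hne, hvw | ⟨m, hvm, hmw⟩⟩
  exacts [⟨hne.symm, Or.inl hvw.symm⟩, ⟨hne.symm, Or.inr ⟨m, hmw.symm, hvm.symm⟩⟩]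

lemma card_ballTwo_le {n : ℕ} (hdeg : ∀ v, G.degree v ≤ n) (v : V) :
    #(G.ballTwo v) ≤ n ^ 2 :=
  calc #(G.ballTwo v)
      ≤ ∑ m ∈ G.neighborFinset v, #(insert m ((G.neighborFinset m).erase v)) := card_biUnion_le
    _ ≤ ∑ m ∈ G.neighborFinset v, G.degree m := by
        refine sum_le_sum fun m hm => (card_insert_le _ _).trans ?_
        have hvm : v ∈ G.neighborFinset m := by simpa [adj_comm] using hm
        rw [card_erase_of_mem hvm, card_neighborFinset_eq_degree]
        have : 0 < G.degree m := G.degree_pos_iff_exists_adj m |>.2 ⟨v, by simpa using hvm⟩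
        omega
    _ ≤ G.degree v * n := by
        rw [← card_neighborFinset_eq_degree, ← smul_eq_mul, ← sum_const]
        exact sum_le_sum fun m _ => hdeg m
    _ ≤ n ^ 2 := by rw [sq]; exact Nat.mul_le_mul_right n (hdeg v)

end SimpleGraph

open SimpleGraph

section UpperBound

variable {V : Type*} [Fintype V] [DecidableEq V] {G : SimpleGraph V} [DecidableRel G.Adj]

lemma IsStarColoring.of_ballTwo {c d : V → ℕ} (hc : IsStarColoring G c)
    (hd : ∀ v, ∀ w ∈ G.ballTwo v, d v = d w → c v = c w) : IsStarColoring G d := by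
  refine ⟨fun u w huw h => hc.1 huw (hd u w (mem_ballTwo.2 ⟨huw.ne', Or.inl huw⟩) h), ?_⟩
  rintro a b x y hab hbx hxy hax hby hay ⟨hax', hby'⟩
  exact hc.2 a b x y hab hbx hxy hax hby hay
    ⟨hd a x (mem_ballTwo.2 ⟨hax.symm, Or.inr ⟨b, hab, hbx⟩⟩) hax',
      hd b y (mem_ballTwo.2 ⟨hby.symm, Or.inr ⟨x, hbx, hxy⟩⟩) hby'⟩

lemma exists_recoloring {n : ℕ} (hdeg : ∀ v, G.degree v ≤ n) (c : V → ℕ) {C : Finset ℕ}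
    (hC : n ^ 2 + 2 ≤ #C) (i : ℕ) (S : Finset V) :
    ∃ d : V → ℕ, (∀ v ∉ S, d v = c v) ∧ (∀ v ∈ S, d v ∈ C ∧ d v ≠ i) ∧
      ∀ v, ∀ w ∈ G.ballTwo v, d v = d w → c v = c w := by
  induction S using Finset.induction_on with
  | empty => exact ⟨c, fun _ _ => rfl, by simp, fun _ _ _ => id⟩
  | @insert a S ha ih =>
    obtain ⟨d, hd_out, hd_in, hd_ball⟩ := ih
    have hforbidden : #(insert i ((G.ballTwo a).image d)) < #C :=
      calc _ ≤ #((G.ballTwo a).image d) + 1 := card_insert_le _ _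
        _ ≤ #(G.ballTwo a) + 1 := by gcongr; exact card_image_le
        _ < #C := by have := card_ballTwo_le hdeg a; omega
    obtain ⟨j, hjC, hj⟩ := exists_mem_notMem_of_card_lt_card hforbidden
    rw [mem_insert, mem_image, not_or, not_exists] at hj
    have hj_ball : ∀ w ∈ G.ballTwo a, j ≠ d w := fun w hw h => hj.2 w ⟨hw, h.symm⟩
    refine ⟨Function.update d a j, fun v hv => ?_, fun v hv => ?_, fun v w hw h => ?_⟩
    · rw [mem_insert, not_or] at hv
      rw [Function.update_of_ne hv.1, hd_out v hv.2]
    · rcases mem_insert.1 hv with rfl | hv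
      · simpa using ⟨hjC, hj.1⟩
      · rw [Function.update_of_ne (ne_of_mem_of_not_mem hv ha)]
        exact hd_in v hv
    · by_cases hva : v = a
      · subst hva
        rw [Function.update_self, Function.update_of_ne (mem_ballTwo.1 hw).1] at h
        exact absurd h (hj_ball w hw)
      by_cases hwa : w = a
      · subst hwa
        rw [Function.update_self, Function.update_of_ne hva] at h
        exact absurd h.symm (hj_ball v (mem_ballTwo_comm.1 hw))
      rw [Function.update_of_ne hva, Function.update_of_ne hwa] at h
      exact hd_ball v w hw h

theorem exists_starRecolorStep_of_sq_add_two_le {n : ℕ} (hdeg : ∀ v, G.degree v ≤ n)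
    {c : V → ℕ} (hc : IsStarColoring G c) (hcard : n ^ 2 + 2 ≤ #(colorsUsed c)) :
    ∃ c', StarRecolorStep G c' c := by
  obtain ⟨i, hi⟩ : (colorsUsed c).Nonempty := card_pos.1 (by omega)
  obtain ⟨d, hd_out, hd_in, hd_ball⟩ :=
    exists_recoloring hdeg c hcard i ({v | c v = i} : Finset V)
  refine ⟨d, hc, hc.of_ballTwo hd_ball, i, hi, fun v hv => hd_out v (by simpa using hv),
    fun v hv => (hd_in v (by simpa using hv)).symm⟩

theorem IsStarBColoring.card_colorsUsed_le {n : ℕ} (hdeg : ∀ v, G.degree v ≤ n)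
    {c : V → ℕ} (hc : IsStarBColoring G c) : #(colorsUsed c) ≤ n ^ 2 + 1 := by
  by_contra! h
  obtain ⟨c', hc'⟩ := exists_starRecolorStep_of_sq_add_two_le hdeg hc.1 h
  exact hc.2 c' hc'

end UpperBound

lemma isStarColoring_of_middle {V : Type*} {G : SimpleGraph V} {c : V → ℕ}
    (hproper : ∀ ⦃u w⦄, G.Adj u w → c u ≠ c w) (P : V → Prop)
    (hmiddle : ∀ m u w, G.Adj m u → G.Adj m w → u ≠ w → c u = c w → P m)
    (hP : ∀ m m', P m → P m' → ¬ G.Adj m m') : IsStarColoring G c :=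
  ⟨hproper, fun a b x y hab hbx hxy hax hby _ ⟨hax', hby'⟩ =>
    hP b x (hmiddle b a x hab.symm hbx hax hax') (hmiddle x b y hbx.symm hxy hby hby') hbx⟩

section LowerBound

variable {V : Type*} [Fintype V] {G : SimpleGraph V}

/-- Giving `r` the color `j` conflicts with vertices outside the color class of `r`, which a
recoloring step leaves unchanged. -/
def StarBlocked (G : SimpleGraph V) (c : V → ℕ) (r : V) (j : ℕ) : Prop :=
  (∃ b, G.Adj r b ∧ c b = j) ∨
    ∃ b x y, G.Adj r b ∧ G.Adj b x ∧ G.Adj x y ∧ r ≠ x ∧ b ≠ y ∧ r ≠ y ∧ c x = j ∧ c b = c y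

theorem not_starRecolorStep_of_starBlocked {c : V → ℕ}
    (hblocked : ∀ i ∈ colorsUsed c, ∃ r, c r = i ∧
      ∀ j ∈ colorsUsed c, j ≠ i → StarBlocked G c r j) (c' : V → ℕ) :
    ¬ StarRecolorStep G c' c := by
  rintro ⟨hc, hc', i, hi, hkeep, hnew⟩
  obtain ⟨r, rfl, hr⟩ := hblocked i hi
  obtain ⟨hne, hmem⟩ := hnew r rfl
  rcases hr _ hmem hne with ⟨b, hrb, hb⟩ | ⟨b, x, y, hrb, hbx, hxy, hrx, hby, hry, hx, hbyc⟩
  · exact hc'.1 hrb (by rw [hkeep b (by rwa [hb]), hb])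
  · have hb' : c b ≠ c r := hc.1 hrb.symm
    refine hc'.2 r b x y hrb hbx hxy hrx hby hry ⟨?_, ?_⟩
    · rw [hkeep x (by rwa [hx]), hx]
    · rw [hkeep b hb', hkeep y (hbyc ▸ hb'), hbyc]

theorem starBChromaticNumber_eq_of_isStarBColoring [DecidableEq V] [DecidableRel G.Adj]
    {n : ℕ} (hdeg : ∀ v, G.degree v ≤ n) {c : V → ℕ} (hc : IsStarBColoring G c)
    (hcard : #(colorsUsed c) = n ^ 2 + 1) : starBChromaticNumber G = n ^ 2 + 1 :=
  IsGreatest.csSup_eq ⟨⟨c, hc, hcard⟩, by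
    rintro _ ⟨c', hc', rfl⟩
    exact hc'.card_colorsUsed_le hdeg⟩

end LowerBound

section Iso

variable {V W : Type*} {G : SimpleGraph V} {H : SimpleGraph W}

lemma colorsUsed_comp_of_surjective [Fintype V] [Fintype W] {f : V → W}
    (hf : Function.Surjective f) (c : W → ℕ) : colorsUsed (c ∘ f) = colorsUsed c := by
  ext j
  simp only [colorsUsed, mem_image, mem_univ, true_and, Function.comp_apply]
  exact (hf.exists (p := fun w => c w = j)).symm

lemma IsStarColoring.comp_iso (e : G ≃g H) {c : W → ℕ} (hc : IsStarColoring H c) :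
    IsStarColoring G (c ∘ e) := by
  refine ⟨fun u w huw => hc.1 (e.map_adj_iff.2 huw), ?_⟩
  intro a b x y hab hbx hxy hax hby hay
  exact hc.2 (e a) (e b) (e x) (e y) (e.map_adj_iff.2 hab) (e.map_adj_iff.2 hbx)
    (e.map_adj_iff.2 hxy) (e.injective.ne hax) (e.injective.ne hby) (e.injective.ne hay)

lemma StarRecolorStep.comp_iso [Fintype V] [Fintype W] (e : G ≃g H) {c' c : W → ℕ}
    (h : StarRecolorStep H c' c) : StarRecolorStep G (c' ∘ e) (c ∘ e) := by
  obtain ⟨hc, hc', i, hi, hkeep, hnew⟩ := h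
  refine ⟨hc.comp_iso e, hc'.comp_iso e, i, ?_, fun v => hkeep (e v), fun v => ?_⟩
  · rwa [colorsUsed_comp_of_surjective e.surjective]
  · rw [colorsUsed_comp_of_surjective e.surjective]
    exact hnew (e v)

lemma IsStarBColoring.comp_iso [Fintype V] [Fintype W] (e : G ≃g H) {c : V → ℕ}
    (hc : IsStarBColoring G c) : IsStarBColoring H (c ∘ e.symm) := by
  refine ⟨hc.1.comp_iso e.symm, fun c' hc' => hc.2 (c' ∘ e) ?_⟩
  simpa [Function.comp_def] using hc'.comp_iso e

end Iso

lemma maxDeg_eq_of_forall_degree_le {V : Type*} [Fintype V] {G : SimpleGraph V}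
    [DecidableRel G.Adj] {n : ℕ} (hdeg : ∀ v, G.degree v ≤ n) {v₀ : V} (hv₀ : G.degree v₀ = n) :
    maxDeg G = n := by
  have hncard : ∀ v, (G.neighborSet v).ncard = G.degree v := fun v => by
    rw [Set.ncard_eq_toFinset_card', ← card_neighborFinset_eq_degree, neighborFinset]
  refine IsGreatest.csSup_eq ⟨⟨v₀, (hncard v₀).trans hv₀⟩, ?_⟩
  rintro _ ⟨v, rfl⟩
  exact (hncard v).trans_le (hdeg v)

theorem exists_fin_tree_of_isStarBColoring {V : Type*} [Fintype V] [DecidableEq V]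
    {G : SimpleGraph V} [DecidableRel G.Adj] (hG : G.IsTree) {n : ℕ}
    (hdeg : ∀ v, G.degree v ≤ n) {v₀ : V} (hv₀ : G.degree v₀ = n) {c : V → ℕ}
    (hc : IsStarBColoring G c) (hcard : #(colorsUsed c) = n ^ 2 + 1) :
    ∃ (m : ℕ) (T : SimpleGraph (Fin m)), T.IsTree ∧ maxDeg T = n ∧
      starBChromaticNumber T = n ^ 2 + 1 := by
  classical
  let e := Iso.map (Fintype.equivFin V) G
  have hdeg' : ∀ v, (G.map (Fintype.equivFin V).toEmbedding).degree v ≤ n := fun v => by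
    simpa [e.degree_eq] using hdeg (e.symm v)
  refine ⟨_, _, e.isTree_iff.1 hG,
    maxDeg_eq_of_forall_degree_le hdeg' (v₀ := e v₀) (by rwa [e.degree_eq]),
    starBChromaticNumber_eq_of_isStarBColoring hdeg' (hc.comp_iso e) ?_⟩
  rwa [colorsUsed_comp_of_surjective e.symm.surjective]

lemma top_fin_two_isTree : (⊤ : SimpleGraph (Fin 2)).IsTree :=
  isTree_of_parent 0 (fun _ => 0) Fin.val rfl (by decide) (by decide) (by decide)

lemma top_fin_two_isStarBColoring : IsStarBColoring (⊤ : SimpleGraph (Fin 2)) Fin.val := by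
  refine ⟨⟨fun u w huw h => huw (Fin.ext h), by decide⟩,
    not_starRecolorStep_of_starBlocked ?_⟩
  simp only [colorsUsed, mem_image, mem_univ, true_and]
  rintro _ ⟨r, rfl⟩
  refine ⟨r, rfl, ?_⟩
  rintro _ ⟨b, rfl⟩ hb
  exact Or.inl ⟨b, fun h => hb (congrArg Fin.val h.symm), rfl⟩

namespace StarBTree

inductive Gadget (p : ℕ) : Type
  | root
  | child (s : Fin (p + 2))
  | grandchild (s : Fin (p + 2)) (t : Fin (p + 1))
  | leaf (s : Fin (p + 2)) (t : Fin (p + 1))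
  deriving DecidableEq, Fintype

namespace Gadget

variable {p : ℕ}

def parent? : Gadget p → Option (Gadget p)
  | root => none
  | child _ => some root
  | grandchild s _ => some (child s)
  | leaf s t => some (grandchild s t)

/-- Root, children and grandchildren get the offsets `0, …, (p + 2) ^ 2` bijectively;
a leaf repeats the offset of its child. -/
def offset : Gadget p → ℕ
  | root => 0
  | child s => s + 1
  | grandchild s t => p + 3 + s * (p + 1) + t
  | leaf s _ => s + 1

end Gadget

open Gadget

abbrev numColors (p : ℕ) : ℕ := (p + 2) ^ 2 + 1

abbrev Vertex (p : ℕ) := Fin (numColors p) × Gadget p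

/-- Gadget `i` is joined to gadget `i + 1` at their leaves `leaf (exitBranch p i) 0`; alternating
the branch keeps every leaf of degree at most two. -/
def exitBranch (p i : ℕ) : Fin (p + 2) := ⟨i % 2, by omega⟩

def Link {p : ℕ} (u v : Vertex p) : Prop :=
  (v.1 : ℕ) = u.1 + 1 ∧ u.2 = leaf (exitBranch p u.1) 0 ∧ v.2 = u.2

def tree (p : ℕ) : SimpleGraph (Vertex p) where
  Adj u v :=
    (u.1 = v.1 ∧ (u.2.parent? = some v.2 ∨ v.2.parent? = some u.2)) ∨ Link u v ∨ Link v u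
  symm := ⟨fun u v => by
    rintro (⟨h, h'⟩ | h | h)
    exacts [Or.inl ⟨h.symm, h'.symm⟩, Or.inr (Or.inr h), Or.inr (Or.inl h)]⟩
  loopless := ⟨fun ⟨i, w⟩ => by
    rintro (⟨-, h | h⟩ | ⟨h, -⟩ | ⟨h, -⟩) <;> first | omega | cases w <;> simp [parent?] at h⟩

variable {p : ℕ}

lemma adj_root {i : Fin (numColors p)} {v : Vertex p} :
    (tree p).Adj (i, root) v ↔ ∃ s, v = (i, child s) := by
  obtain ⟨j, _ | _ | _ | _⟩ := v <;> simp [tree, parent?, Link, eq_comm]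

lemma adj_child {i : Fin (numColors p)} {s : Fin (p + 2)} {v : Vertex p} :
    (tree p).Adj (i, child s) v ↔ v = (i, root) ∨ ∃ t, v = (i, grandchild s t) := by
  obtain ⟨j, _ | _ | _ | _⟩ := v <;> simp [tree, parent?, Link, eq_comm]

lemma adj_grandchild {i : Fin (numColors p)} {s : Fin (p + 2)} {t : Fin (p + 1)}
    {v : Vertex p} : (tree p).Adj (i, grandchild s t) v ↔ v = (i, child s) ∨ v = (i, leaf s t) := by
  obtain ⟨j, _ | _ | _ | _⟩ := v <;> simp [tree, parent?, Link, eq_comm]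

lemma adj_leaf {i : Fin (numColors p)} {s : Fin (p + 2)} {t : Fin (p + 1)} {v : Vertex p} :
    (tree p).Adj (i, leaf s t) v ↔ v = (i, grandchild s t) ∨ t = 0 ∧ v.2 = leaf s 0 ∧
      ((v.1 : ℕ) = i + 1 ∧ s = exitBranch p i ∨ (i : ℕ) = v.1 + 1 ∧ s = exitBranch p v.1) := by
  obtain ⟨j, _ | _ | _ | _⟩ := v <;> simp [tree, parent?, Link, eq_comm]
  grind

lemma exitBranch_ne_exitBranch_succ (i : ℕ) : exitBranch p (i + 1) ≠ exitBranch p i := by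
  simp only [exitBranch, ne_eq, Fin.mk.injEq]
  omega

lemma eq_of_adj_leaf {i : Fin (numColors p)} {s : Fin (p + 2)} {t : Fin (p + 1)}
    {u w : Vertex p} (hu : (tree p).Adj (i, leaf s t) u) (hw : (tree p).Adj (i, leaf s t) w)
    (hui : u.1 ≠ i) (hwi : w.1 ≠ i) : u = w := by
  rw [adj_leaf] at hu hw
  rcases hu with rfl | ⟨-, hu2, hu1⟩
  · exact absurd rfl hui
  rcases hw with rfl | ⟨-, hw2, hw1⟩
  · exact absurd rfl hwi
  refine Prod.ext (Fin.ext ?_) (hu2.trans hw2.symm)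
  have := @exitBranch_ne_exitBranch_succ p
  rcases hu1 with ⟨hu1, rfl⟩ | ⟨hu1, rfl⟩ <;> rcases hw1 with ⟨hw1, hs⟩ | ⟨hw1, hs⟩
  · omega
  · exact (this _ (by rwa [hw1] at hs)).elim
  · exact (this _ (by rw [hu1] at hs; exact hs.symm)).elim
  · omega

def color (v : Vertex p) : ℕ := (v.1 + v.2.offset) % numColors p

lemma offset_lt (w : Gadget p) : w.offset < numColors p := by
  cases w with
  | root => simp [offset]
  | child s | leaf s _ => simp only [offset, numColors]; nlinarith [s.isLt]
  | grandchild s t =>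
    have : s * (p + 1) ≤ (p + 1) * (p + 1) := Nat.mul_le_mul_right _ (by omega)
    simp only [offset, numColors]
    nlinarith [t.isLt]

lemma color_eq_color_iff {i : Fin (numColors p)} {w w' : Gadget p} :
    color (i, w) = color (i, w') ↔ w.offset = w'.offset := by
  refine ⟨fun h => ?_, fun h => by simp only [color, h]⟩
  have := Nat.ModEq.add_left_cancel' _ h
  rwa [Nat.ModEq, Nat.mod_eq_of_lt (offset_lt w), Nat.mod_eq_of_lt (offset_lt w')] at this

lemma color_ne_color_of_succ {i j : Fin (numColors p)} {w w' : Gadget p}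
    (hij : (j : ℕ) = i + 1) (h0 : w.offset ≠ 0) (h1 : w.offset ≠ w'.offset + 1) :
    color (i, w) ≠ color (j, w') := by
  intro h
  have : w.offset ≡ w'.offset + 1 [MOD numColors p] :=
    Nat.ModEq.add_left_cancel' (i : ℕ) (by
      unfold Nat.ModEq; simpa [color, hij, add_assoc, add_comm 1] using h)
  rw [Nat.ModEq, Nat.mod_eq_of_lt (offset_lt w)] at this
  rcases Nat.lt_or_ge (w'.offset + 1) (numColors p) with hlt | hge
  · exact h1 (this.trans (Nat.mod_eq_of_lt hlt))
  · have heq : w'.offset + 1 = numColors p := le_antisymm (offset_lt w') hge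
    exact h0 (by rw [this, heq, Nat.mod_self])

lemma color_root (i : Fin (numColors p)) : color (i, root) = i := by
  simp [color, offset, Nat.mod_eq_of_lt i.isLt]

lemma color_ne_color_of_adj {u v : Vertex p} (h : (tree p).Adj u v) : color u ≠ color v := by
  obtain ⟨i, _ | s | ⟨s, t⟩ | ⟨s, t⟩⟩ := u
  · obtain ⟨s, rfl⟩ := adj_root.1 h
    simp [color_eq_color_iff, offset]
  · rcases adj_child.1 h with rfl | ⟨t, rfl⟩ <;> simp [color_eq_color_iff, offset]; omega
  · rcases adj_grandchild.1 h with rfl | rfl <;> simp [color_eq_color_iff, offset] <;> omega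
  · obtain ⟨j, w⟩ := v
    rcases adj_leaf.1 h with h' | ⟨-, rfl, ⟨hj, -⟩ | ⟨hj, -⟩⟩
    · obtain ⟨rfl, rfl⟩ := Prod.mk.inj h'
      simp [color_eq_color_iff, offset]
      omega
    · exact color_ne_color_of_succ hj (by simp [offset]) (by simp [offset])
    · exact (color_ne_color_of_succ hj (by simp [offset]) (by simp [offset])).symm

lemma eq_grandchild_of_adj_leaf {i : Fin (numColors p)} {s : Fin (p + 2)} {t : Fin (p + 1)}
    {u : Vertex p} (hu : (tree p).Adj (i, leaf s t) u) (hui : u.1 = i) :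
    u = (i, grandchild s t) := by
  rcases adj_leaf.1 hu with h | ⟨-, -, ⟨h, -⟩ | ⟨h, -⟩⟩
  · exact h
  all_goals rw [hui] at h; omega

lemma color_grandchild_ne_of_adj_leaf {i : Fin (numColors p)} {s : Fin (p + 2)}
    {t : Fin (p + 1)} {w : Vertex p} (hw : (tree p).Adj (i, leaf s t) w) (hwi : w.1 ≠ i) :
    color (i, grandchild s t) ≠ color w := by
  obtain ⟨j, w⟩ := w
  have hs : (s : ℕ) ≤ s * (p + 1) := Nat.le_mul_of_pos_right _ (by omega)
  rcases adj_leaf.1 hw with h | ⟨rfl, rfl, ⟨hj, -⟩ | ⟨hj, -⟩⟩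
  · exact absurd (congrArg Prod.fst h) hwi
  · exact color_ne_color_of_succ hj (by simp [offset]) (by simp [offset]; omega)
  · exact (color_ne_color_of_succ hj (by simp [offset]) (by simp [offset]; omega)).symm

lemma exists_eq_grandchild_of_adj_adj {m u w : Vertex p} (hu : (tree p).Adj m u)
    (hw : (tree p).Adj m w) (hne : u ≠ w) (hc : color u = color w) :
    ∃ s t, m.2 = grandchild s t := by
  obtain ⟨i, _ | s | ⟨s, t⟩ | ⟨s, t⟩⟩ := m
  · obtain ⟨s, rfl⟩ := adj_root.1 hu
    obtain ⟨s', rfl⟩ := adj_root.1 hw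
    simp only [color_eq_color_iff, offset, add_left_inj, Fin.val_inj] at hc
    exact absurd (by rw [hc]) hne
  · exfalso
    rcases adj_child.1 hu with rfl | ⟨t, rfl⟩ <;> rcases adj_child.1 hw with rfl | ⟨t', rfl⟩ <;>
      simp [color_eq_color_iff, offset] at hc hne <;> omega
  · exact ⟨s, t, rfl⟩
  · exfalso
    by_cases hui : u.1 = i <;> by_cases hwi : w.1 = i
    · exact hne ((eq_grandchild_of_adj_leaf hu hui).trans (eq_grandchild_of_adj_leaf hw hwi).symm)
    · exact color_grandchild_ne_of_adj_leaf hw hwi (eq_grandchild_of_adj_leaf hu hui ▸ hc)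
    · exact color_grandchild_ne_of_adj_leaf hu hui (eq_grandchild_of_adj_leaf hw hwi ▸ hc.symm)
    · exact hne (eq_of_adj_leaf hu hw hui hwi)

lemma isStarColoring_color : IsStarColoring (tree p) color := by
  refine isStarColoring_of_middle (fun _ _ => color_ne_color_of_adj) _
    (fun _ _ _ => exists_eq_grandchild_of_adj_adj) ?_
  rintro ⟨i, _⟩ ⟨j, _⟩ ⟨s, t, rfl⟩ ⟨s', t', rfl⟩ h
  rcases adj_grandchild.1 h with h | h <;> simp at h

lemma colorsUsed_color : colorsUsed (color : Vertex p → ℕ) = range (numColors p) := by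
  ext j
  simp only [colorsUsed, mem_image, mem_univ, true_and, mem_range]
  refine ⟨?_, fun hj => ⟨(⟨j, hj⟩, root), color_root _⟩⟩
  rintro ⟨v, rfl⟩
  exact Nat.mod_lt _ (by positivity)

lemma exists_offset_eq {d : ℕ} (hd₀ : d ≠ 0) (hd : d < numColors p) :
    (∃ s, (child s : Gadget p).offset = d) ∨ ∃ s t, (grandchild s t : Gadget p).offset = d := by
  by_cases hdp : d ≤ p + 2
  · exact Or.inl ⟨⟨d - 1, by omega⟩, by simp [offset]; omega⟩
  · have hlt : (d - (p + 3)) / (p + 1) < p + 2 := by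
      rw [Nat.div_lt_iff_lt_mul (by omega)]
      have : (p + 2) ^ 2 = (p + 2) * (p + 1) + (p + 2) := by ring
      simp only [numColors] at hd
      omega
    refine Or.inr ⟨⟨_, hlt⟩, ⟨(d - (p + 3)) % (p + 1), Nat.mod_lt _ (by omega)⟩, ?_⟩
    simp only [offset]
    have := Nat.div_add_mod' (d - (p + 3)) (p + 1)
    omega

lemma starBlocked_root (i : Fin (numColors p)) {j : ℕ} (hj : j < numColors p)
    (hji : j ≠ i) : StarBlocked (tree p) color (i, root) j := by
  obtain ⟨d, hd₀, hd, rfl⟩ : ∃ d, d ≠ 0 ∧ d < numColors p ∧ (i + d) % numColors p = j := by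
    rcases lt_or_gt_of_ne hji with h | h
    · exact ⟨j + numColors p - i, by omega, by omega, by
        rw [show (i : ℕ) + (j + numColors p - i) = j + numColors p by omega, Nat.add_mod_right,
          Nat.mod_eq_of_lt hj]⟩
    · exact ⟨j - i, by omega, by omega, by rw [Nat.add_sub_cancel' h.le, Nat.mod_eq_of_lt hj]⟩
  rcases exists_offset_eq hd₀ hd with ⟨s, rfl⟩ | ⟨s, t, rfl⟩
  · exact Or.inl ⟨(i, child s), adj_root.2 ⟨s, rfl⟩, rfl⟩
  · refine Or.inr ⟨(i, child s), (i, grandchild s t), (i, leaf s t), adj_root.2 ⟨s, rfl⟩,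
      adj_child.2 (Or.inr ⟨t, rfl⟩), adj_grandchild.2 (Or.inr rfl), by simp, by simp, by simp,
      rfl, rfl⟩

lemma isStarBColoring_color : IsStarBColoring (tree p) color := by
  refine ⟨isStarColoring_color, not_starRecolorStep_of_starBlocked fun i hi => ?_⟩
  rw [colorsUsed_color, mem_range] at hi
  refine ⟨(⟨i, hi⟩, root), color_root _, fun j hj hji => ?_⟩
  rw [colorsUsed_color, mem_range] at hj
  exact starBlocked_root _ hj hji

instance : DecidableRel (tree p).Adj := fun u v => by
  unfold tree Link
  infer_instance

lemma degree_root (i : Fin (numColors p)) : (tree p).degree (i, root) = p + 2 := by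
  have : (tree p).neighborFinset (i, root) = univ.image fun s => (i, child s) := by
    ext v
    simp [adj_root, eq_comm]
  rw [← card_neighborFinset_eq_degree, this,
    card_image_of_injective _ fun s s' h => by simpa using h, card_univ, Fintype.card_fin]

lemma degree_le (v : Vertex p) : (tree p).degree v ≤ p + 2 := by
  rw [← card_neighborFinset_eq_degree]
  obtain ⟨i, _ | s | ⟨s, t⟩ | ⟨s, t⟩⟩ := v
  · rw [card_neighborFinset_eq_degree, degree_root]
  · have : (tree p).neighborFinset (i, child s) ⊆
        insert (i, root) (univ.image fun t => (i, grandchild s t)) := by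
      intro v hv
      rcases adj_child.1 ((mem_neighborFinset _ _ _).1 hv) with rfl | ⟨t, rfl⟩ <;> simp
    calc _ ≤ _ := card_le_card this
      _ ≤ _ + 1 := card_insert_le _ _
      _ ≤ p + 2 := by grw [card_image_le]; simp
  · have : (tree p).neighborFinset (i, grandchild s t) ⊆ {(i, child s), (i, leaf s t)} := by
      intro v hv
      rcases adj_grandchild.1 ((mem_neighborFinset _ _ _).1 hv) with rfl | rfl <;> simp
    exact (card_le_card this).trans (card_le_two.trans (by omega))
  · set far := (tree p).neighborFinset (i, leaf s t) |>.filter (·.1 ≠ i)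
    have : (tree p).neighborFinset (i, leaf s t) ⊆ insert (i, grandchild s t) far := by
      intro v hv
      by_cases hvi : v.1 = i
      · rw [mem_neighborFinset] at hv
        exact mem_insert.2 (Or.inl (eq_grandchild_of_adj_leaf hv hvi))
      · exact mem_insert_of_mem (mem_filter.2 ⟨hv, hvi⟩)
    have hle : #far ≤ 1 := by
      refine card_le_one.2 fun u hu w hw => ?_
      simp only [far, mem_filter, mem_neighborFinset] at hu hw
      exact eq_of_adj_leaf hu.1 hw.1 hu.2 hw.2
    exact (card_le_card this).trans ((card_insert_le _ _).trans (by omega))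

/- With the root of gadget `0` as the root of the tree, gadget `i ≠ 0` hangs from gadget `i - 1`
by its leaf `leaf (exitBranch p (i - 1)) 0`, so on the path from that leaf to the gadget root the
parent points away from the gadget root. -/

def parent : Vertex p → Vertex p
  | (i, root) => if (i : ℕ) = 0 then (i, root) else (i, child (exitBranch p (i - 1)))
  | (i, child s) =>
    if (i : ℕ) ≠ 0 ∧ s = exitBranch p (i - 1) then (i, grandchild s 0) else (i, root)
  | (i, grandchild s t) =>
    if (i : ℕ) ≠ 0 ∧ s = exitBranch p (i - 1) ∧ t = 0 then (i, leaf s 0) else (i, child s)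
  | (i, leaf s t) =>
    if h : (i : ℕ) ≠ 0 ∧ s = exitBranch p (i - 1) ∧ t = 0 then (⟨i - 1, by omega⟩, leaf s 0)
    else (i, grandchild s t)

def height : Vertex p → ℕ
  | (i, root) => 7 * i + 3
  | (i, child s) => 7 * i + if (i : ℕ) ≠ 0 ∧ s = exitBranch p (i - 1) then 2 else 4
  | (i, grandchild s t) =>
    7 * i + if (i : ℕ) ≠ 0 ∧ s = exitBranch p (i - 1) ∧ t = 0 then 1 else 5
  | (i, leaf s t) => 7 * i + if (i : ℕ) ≠ 0 ∧ s = exitBranch p (i - 1) ∧ t = 0 then 0 else 6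

def treeRoot : Vertex p := (⟨0, by positivity⟩, root)

lemma height_lt (v : Vertex p) : height v < 7 * v.1 + 7 := by
  obtain ⟨i, _ | s | ⟨s, t⟩ | ⟨s, t⟩⟩ := v <;> simp only [height] <;> (try split_ifs) <;> omega

lemma fst_ne_zero_of_ne_treeRoot {i : Fin (numColors p)} (h : (i, root) ≠ treeRoot) :
    (i : ℕ) ≠ 0 :=
  fun hi => h (Prod.ext (Fin.ext hi) rfl)

lemma adj_parent (v : Vertex p) (hv : v ≠ treeRoot) : (tree p).Adj v (parent v) := by
  obtain ⟨i, _ | s | ⟨s, t⟩ | ⟨s, t⟩⟩ := v <;> simp only [parent]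
  · rw [if_neg (fst_ne_zero_of_ne_treeRoot hv)]
    exact adj_root.2 ⟨_, rfl⟩
  · split_ifs
    exacts [adj_child.2 (Or.inr ⟨0, rfl⟩), adj_child.2 (Or.inl rfl)]
  · split_ifs with h
    exacts [h.2.2 ▸ adj_grandchild.2 (Or.inr rfl), adj_grandchild.2 (Or.inl rfl)]
  · split_ifs with h
    · obtain ⟨hi, rfl, rfl⟩ := h
      exact adj_leaf.2 (Or.inr ⟨rfl, rfl, Or.inr ⟨by simp; omega, rfl⟩⟩)
    · exact adj_leaf.2 (Or.inl rfl)

lemma height_parent_lt (v : Vertex p) (hv : v ≠ treeRoot) : height (parent v) < height v := by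
  obtain ⟨i, _ | s | ⟨s, t⟩ | ⟨s, t⟩⟩ := v
  · simp [parent, height, fst_ne_zero_of_ne_treeRoot hv]
  all_goals simp only [parent]; split_ifs with h
  · simp [height, h]
  · simp only [height, if_neg h]; omega
  · simp [height, h]
  · simp only [height, if_neg h]; split_ifs <;> omega
  · have := height_lt (⟨i - 1, by omega⟩, leaf s 0)
    simp only [height, if_pos h] at this ⊢
    omega
  · simp only [height, if_neg h]; omega

lemma parent_eq_or_parent_eq_of_parent? {u v : Vertex p} (h₁ : u.1 = v.1)
    (h₂ : u.2.parent? = some v.2) : parent u = v ∨ parent v = u := by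
  obtain ⟨i, _ | s | ⟨s, t⟩ | ⟨s, t⟩⟩ := u <;> obtain ⟨j, w⟩ := v <;>
    simp only [parent?, Option.some.injEq, reduceCtorEq] at h₂ <;> subst h₁ h₂ <;>
    simp only [parent] <;> split_ifs with h
  all_goals first | exact Or.inl rfl | simp_all

lemma parent_eq_of_link {u v : Vertex p} (h : Link u v) : parent v = u := by
  obtain ⟨i, w⟩ := u
  obtain ⟨j, w'⟩ := v
  obtain ⟨hj, hw, hw'⟩ := h
  simp only at hj hw hw'
  subst hw' hw
  have hj' : (j : ℕ) - 1 = i := by omega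
  simp only [parent, hj', and_self, and_true, dif_pos (show (j : ℕ) ≠ 0 by omega)]

lemma parent_eq_or_parent_eq_of_adj {u v : Vertex p} (h : (tree p).Adj u v) :
    parent u = v ∨ parent v = u := by
  rcases h with ⟨h₁, h₂ | h₂⟩ | h | h
  · exact parent_eq_or_parent_eq_of_parent? h₁ h₂
  · exact (parent_eq_or_parent_eq_of_parent? h₁.symm h₂).symm
  · exact Or.inr (parent_eq_of_link h)
  · exact Or.inl (parent_eq_of_link h)

lemma isTree_tree : (tree p).IsTree :=
  isTree_of_parent treeRoot parent height (by simp [treeRoot, parent]) adj_parent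
    height_parent_lt fun _ _ => parent_eq_or_parent_eq_of_adj

end StarBTree

/-- **Theorem (sharpness of the bound `Sᵦ(G) ≤ Δ(G)² + 1`).** For every positive
integer `n` there exists a finite tree `T` with maximum degree `Δ(T) = n` and
`Sᵦ(T) = Δ(T)² + 1 = n² + 1`. -/
theorem exists_tree_starB_eq_maxDeg_sq_add_one (n : ℕ) (hn : 0 < n) :
    ∃ (m : ℕ) (T : SimpleGraph (Fin m)), T.IsTree ∧ maxDeg T = n ∧
      starBChromaticNumber T = n ^ 2 + 1 := by
  obtain rfl | ⟨p, rfl⟩ : n = 1 ∨ ∃ p, n = p + 2 := by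
    rcases n with _ | _ | p
    exacts [absurd hn (lt_irrefl 0), Or.inl rfl, Or.inr ⟨p, rfl⟩]
  · exact exists_fin_tree_of_isStarBColoring top_fin_two_isTree (fun _ => by simp) (v₀ := 0)
      (by simp) top_fin_two_isStarBColoring (by decide)
  · exact exists_fin_tree_of_isStarBColoring StarBTree.isTree_tree StarBTree.degree_le
      (StarBTree.degree_root 0) StarBTree.isStarBColoring_color
      (by rw [StarBTree.colorsUsed_color, card_range])
end
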